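/- Let x ∈ W₀, i.e. |x₀| < x₁, and define F : ℂ → ℂ⁴ by F(τ) = (x₀ cosh τ + x₁ sinh τ, x₀ sinh τ + x₁ cosh τ, x₂, x₃). Then F(t) = Λ₀(t)x for every real t; F(iπ) = j₀x; and for every τ ∈ ℂ with Im τ ∈ (0,π) the imaginary part of F(τ) lies in the open forward light cone: Im F₀(τ) > |Im F₁(τ)| and Im F₂(τ) = Im F₃(τ) = 0. -/
import Mathlib


noncomputable section

/-- The standard wedge W₀ = {x : |x₀| < x₁}. -/
def W0 : Set (Fin 4 → ℝ) := {x | |x 0| < x 1}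

/-- The standard boost Λ₀(t). -/
def boost (t : ℝ) (x : Fin 4 → ℝ) : Fin 4 → ℝ :=
  ![x 0 * Real.cosh t + x 1 * Real.sinh t,
    x 0 * Real.sinh t + x 1 * Real.cosh t,
    x 2, x 3]

/-- The reflection j₀ about the edge of the standard wedge. -/
def j0 (x : Fin 4 → ℝ) : Fin 4 → ℝ := ![-x 0, -x 1, x 2, x 3]

/-- The analytic continuation of the boosted orbit of a point of W₀. -/
def Fcont (x : Fin 4 → ℝ) (τ : ℂ) : Fin 4 → ℂ :=
  ![(x 0 : ℂ) * Complex.cosh τ + (x 1 : ℂ) * Complex.sinh τ,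
    (x 0 : ℂ) * Complex.sinh τ + (x 1 : ℂ) * Complex.cosh τ,
    (x 2 : ℂ), (x 3 : ℂ)]

lemma cosh_im' (τ : ℂ) : (Complex.cosh τ).im = Real.sinh τ.re * Real.sin τ.im := by
  nth_rewrite 1 [show τ = (τ.re : ℂ) + (τ.im : ℂ) * Complex.I from (Complex.re_add_im τ).symm]
  rw [Complex.cosh_add, Complex.cosh_mul_I, Complex.sinh_mul_I,
    ← Complex.ofReal_cosh, ← Complex.ofReal_sinh, ← Complex.ofReal_cos, ← Complex.ofReal_sin]
  simp [Complex.add_im, Complex.mul_im, Complex.sinh_ofReal_re, Complex.cosh_ofReal_re, Complex.sin_ofReal_re, Complex.cos_ofReal_re]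

lemma sinh_im' (τ : ℂ) : (Complex.sinh τ).im = Real.cosh τ.re * Real.sin τ.im := by
  nth_rewrite 1 [show τ = (τ.re : ℂ) + (τ.im : ℂ) * Complex.I from (Complex.re_add_im τ).symm]
  rw [Complex.sinh_add, Complex.cosh_mul_I, Complex.sinh_mul_I,
    ← Complex.ofReal_cosh, ← Complex.ofReal_sinh, ← Complex.ofReal_cos, ← Complex.ofReal_sin]
  simp [Complex.add_im, Complex.mul_im, Complex.sinh_ofReal_re, Complex.cosh_ofReal_re, Complex.sin_ofReal_re, Complex.cos_ofReal_re]

/-- For x ∈ W₀, the analytic continuation τ ↦ F(τ) of the boost orbit satisfies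
F(t) = Λ₀(t)x for real t, F(iπ) = j₀x, and for Im τ ∈ (0,π) the imaginary part of
F(τ) lies in the open forward light cone. -/
theorem stmt4 (x : Fin 4 → ℝ) (hx : x ∈ W0) :
    (∀ t : ℝ, ∀ i : Fin 4, Fcont x t i = ((boost t x) i : ℂ)) ∧
    (∀ i : Fin 4, Fcont x ((Real.pi : ℂ) * Complex.I) i = ((j0 x) i : ℂ)) ∧
    (∀ τ : ℂ, 0 < τ.im → τ.im < Real.pi →
      |(Fcont x τ 1).im| < (Fcont x τ 0).im ∧
      (Fcont x τ 2).im = 0 ∧ (Fcont x τ 3).im = 0) := by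
  refine ⟨?_, ?_, ?_⟩
  · intro t i
    fin_cases i <;>
      simp [Fcont, boost, ← Complex.ofReal_cosh, ← Complex.ofReal_sinh]
  · intro i
    fin_cases i <;>
      simp [Fcont, j0, Complex.cosh_mul_I, Complex.sinh_mul_I, Complex.cos_pi, Complex.sin_pi]
  · intro τ h0 hπ
    have hsin : 0 < Real.sin τ.im := Real.sin_pos_of_pos_of_lt_pi h0 hπ
    have hx' : |x 0| < x 1 := hx
    have h1 : 0 < x 1 + x 0 := by cases abs_lt.mp hx'; linarith
    have h2 : 0 < x 1 - x 0 := by cases abs_lt.mp hx'; linarith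
    have hc : Real.sinh τ.re < Real.cosh τ.re ∧ -Real.cosh τ.re < Real.sinh τ.re := by
      constructor <;> nlinarith [Real.sinh_lt_cosh τ.re, Real.cosh_pos τ.re,
        Real.cosh_sq τ.re, Real.sinh_sq τ.re]
    refine ⟨?_, ?_, ?_⟩
    · show |((x 0 : ℂ) * Complex.sinh τ + (x 1 : ℂ) * Complex.cosh τ).im| <
        ((x 0 : ℂ) * Complex.cosh τ + (x 1 : ℂ) * Complex.sinh τ).im
      simp only [Complex.add_im, Complex.mul_im, Complex.ofReal_re, Complex.ofReal_im,
        cosh_im', sinh_im', zero_mul, add_zero]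
      rw [abs_lt]
      constructor <;> nlinarith [hc.1, hc.2, mul_pos h1 hsin, mul_pos h2 hsin,
        mul_pos (mul_pos h1 hsin) (show 0 < Real.cosh τ.re + Real.sinh τ.re by linarith [hc.2]),
        mul_pos (mul_pos h2 hsin) (show 0 < Real.cosh τ.re - Real.sinh τ.re by linarith [hc.1])]
    · simp [Fcont]
    · simp [Fcont]
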